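/- Every guarded recursive specification over BTA has exactly one solution in the projective limit model of BTA. -/
import Mathlib


/-- Finite threads of basic thread algebra: the inductive type generated by
inaction `dead` (D), termination `term` (S) and, for each action `a`,
postconditional composition `pcc x a y` (x ⊴ a ⊵ y). -/
inductive FinThread (A : Type) : Type where
  | dead : FinThread A
  | term : FinThread A
  | pcc : FinThread A → A → FinThread A → FinThread A

namespace FinThread

/-- The projection operation π_n on finite threads. -/
def proj {A : Type} : ℕ → FinThread A → FinThread A
  | 0, _ => .dead
  | _ + 1, .dead => .dead
  | _ + 1, .term => .term
  | n + 1, .pcc x a y => .pcc (proj n x) a (proj n y)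

end FinThread

/-- The projective limit model of BTA: threads are the sequences `(p_n)` of
finite threads with `π_n (p_(n+1)) = p_n` for all `n`. -/
structure Thread (A : Type) : Type where
  approx : ℕ → FinThread A
  coh : ∀ n, FinThread.proj n (approx (n + 1)) = approx n

namespace Thread

/-- Inaction D, lifted componentwise to the projective limit model. -/
def dead (A : Type) : Thread A :=
  ⟨fun _ => .dead, by intro n; cases n <;> rfl⟩

/-- Termination S, lifted componentwise to the projective limit model. -/
def term (A : Type) : Thread A :=
  ⟨fun n => match n with | 0 => .dead | _ + 1 => .term,
   by intro n; cases n <;> rfl⟩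

/-- Postconditional composition, lifted componentwise (cutting each component
to the appropriate depth) to the projective limit model. -/
def pcc {A : Type} (x : Thread A) (a : A) (y : Thread A) : Thread A where
  approx := fun n => match n with
    | 0 => .dead
    | n + 1 => .pcc (x.approx n) a (y.approx n)
  coh := by
    intro n
    cases n with
    | zero => rfl
    | succ n =>
      show FinThread.proj (n + 1) (.pcc (x.approx (n + 1)) a (y.approx (n + 1))) =
        FinThread.pcc (x.approx n) a (y.approx n)
      simp [FinThread.proj, x.coh n, y.coh n]

end Thread

/-- Terms over a set `V` of variables for the right-hand sides of guarded
recursive specifications over BTA: built from D, S, postconditional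
composition and variables. -/
inductive SpecTerm (A V : Type) : Type where
  | dead : SpecTerm A V
  | term : SpecTerm A V
  | var : V → SpecTerm A V
  | pcc : SpecTerm A V → A → SpecTerm A V → SpecTerm A V

namespace SpecTerm

/-- Evaluation of a specification term in the projective limit model under an
assignment of threads to variables. -/
def eval {A V : Type} (ρ : V → Thread A) : SpecTerm A V → Thread A
  | .dead => Thread.dead A
  | .term => Thread.term A
  | .var X => ρ X
  | .pcc t a t' => Thread.pcc (t.eval ρ) a (t'.eval ρ)

end SpecTerm

/-- A recursive specification `E = {X = t_X | X ∈ V}` is guarded if each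
right-hand side is of the form D, S, or `t ⊴ a ⊵ t'`. -/
def Guarded {A V : Type} (E : V → SpecTerm A V) : Prop :=
  ∀ X, E X = .dead ∨ E X = .term ∨ ∃ t a t', E X = .pcc t a t'

/-- `ρ` is a solution of the recursive specification `E` in the projective
limit model. -/
def IsSolution {A V : Type} (E : V → SpecTerm A V) (ρ : V → Thread A) : Prop :=
  ∀ X, ρ X = (E X).eval ρ

namespace FinThread

theorem proj_proj {A : Type} (p : FinThread A) :
    ∀ m n, m ≤ n → proj m (proj n p) = proj m p := by
  induction p with
  | dead => intro m n _; cases n <;> cases m <;> simp [proj]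
  | term => intro m n h; cases n <;> cases m <;> simp_all [proj]
  | pcc x a y ihx ihy =>
    intro m n h
    cases n with
    | zero => cases m with
      | zero => rfl
      | succ m => omega
    | succ n =>
      cases m with
      | zero => rfl
      | succ m => simp [proj, ihx m n (by omega), ihy m n (by omega)]

end FinThread

namespace Thread

theorem approx_zero {A : Type} (x : Thread A) : x.approx 0 = .dead := by
  rw [← x.coh 0]; rfl

theorem proj_approx_self {A : Type} (x : Thread A) (n : ℕ) :
    FinThread.proj n (x.approx n) = x.approx n := by
  rw [← x.coh n, FinThread.proj_proj _ n n le_rfl]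

theorem proj_approx {A : Type} (x : Thread A) :
    ∀ n m, m ≤ n → FinThread.proj m (x.approx n) = x.approx m := by
  intro n
  induction n with
  | zero => intro m h; interval_cases m; simp [approx_zero, FinThread.proj]
  | succ n ih =>
    intro m h
    rcases Nat.lt_or_ge m (n+1) with h' | h'
    · rw [← FinThread.proj_proj _ m n (by omega), x.coh n, ih m (by omega)]
    · have : m = n + 1 := by omega
      subst this; exact proj_approx_self x _

theorem ext' {A : Type} {x y : Thread A} (h : ∀ n, x.approx n = y.approx n) : x = y := by
  cases x; cases y
  simp only [Thread.mk.injEq]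
  exact funext h

end Thread

/-- Finite-depth evaluation of a spec term under a finite assignment. -/
def fEval {A V : Type} (σ : V → FinThread A) : ℕ → SpecTerm A V → FinThread A
  | 0, _ => .dead
  | _+1, .dead => .dead
  | _+1, .term => .term
  | n+1, .var Y => FinThread.proj (n+1) (σ Y)
  | n+1, .pcc t a t' => .pcc (fEval σ n t) a (fEval σ n t')

theorem proj_fEval {A V : Type} (σ : V → FinThread A) :
    ∀ (t : SpecTerm A V) n, FinThread.proj n (fEval σ (n+1) t) = fEval σ n t := by
  intro t
  induction t with
  | dead => intro n; cases n <;> rfl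
  | term => intro n; cases n <;> rfl
  | var Y => intro n
             cases n with
             | zero => rfl
             | succ n => exact FinThread.proj_proj _ (n+1) (n+2) (by omega)
  | pcc t a t' iht iht' =>
    intro n
    cases n with
    | zero => rfl
    | succ n => simp [fEval, FinThread.proj, iht n, iht' n]

theorem fEval_congr {A V : Type} {σ σ' : V → FinThread A} :
    ∀ (t : SpecTerm A V) n,
      (∀ m ≤ n, ∀ Y, FinThread.proj m (σ Y) = FinThread.proj m (σ' Y)) →
      fEval σ n t = fEval σ' n t := by
  intro t
  induction t with
  | dead => intro n _; cases n <;> rfl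
  | term => intro n _; cases n <;> rfl
  | var Y => intro n h
             cases n with
             | zero => rfl
             | succ n => exact h (n+1) le_rfl Y
  | pcc t a t' iht iht' =>
    intro n h
    cases n with
    | zero => rfl
    | succ n =>
      simp [fEval, iht n (fun m hm => h m (by omega)),
        iht' n (fun m hm => h m (by omega))]

theorem fEval_congr_guarded {A V : Type} {σ σ' : V → FinThread A}
    (t : SpecTerm A V)
    (ht : t = .dead ∨ t = .term ∨ ∃ u a u', t = .pcc u a u') (n : ℕ)
    (h : ∀ m ≤ n, ∀ Y, FinThread.proj m (σ Y) = FinThread.proj m (σ' Y)) :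
    fEval σ (n+1) t = fEval σ' (n+1) t := by
  rcases ht with rfl | rfl | ⟨u, a, u', rfl⟩
  · rfl
  · rfl
  · simp [fEval, fEval_congr u n h, fEval_congr u' n h]

/-- Level-`n` approximation to the solution of `E`. -/
def gApprox {A V : Type} (E : V → SpecTerm A V) : ℕ → V → FinThread A
  | 0 => fun _ => .dead
  | n+1 => fun X => fEval (gApprox E n) (n+1) (E X)

theorem gApprox_coh {A V : Type} (E : V → SpecTerm A V) (hE : Guarded E) :
    ∀ n X, FinThread.proj n (gApprox E (n+1) X) = gApprox E n X := by
  intro n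
  induction n with
  | zero => intro X; cases gApprox E 1 X <;> rfl
  | succ n ih =>
    intro X
    show FinThread.proj (n+1) (fEval (gApprox E (n+1)) (n+2) (E X)) = _
    rw [proj_fEval]
    show _ = fEval (gApprox E n) (n+1) (E X)
    exact fEval_congr_guarded (E X) (hE X) n (fun m hm Y => by
      rw [← FinThread.proj_proj (gApprox E (n+1) Y) m n hm, ih Y] )

theorem eval_approx {A V : Type} (ρ : V → Thread A) :
    ∀ (t : SpecTerm A V) n,
      (t.eval ρ).approx n = fEval (fun Y => (ρ Y).approx n) n t := by
  intro t
  induction t with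
  | dead => intro n; cases n <;> rfl
  | term => intro n; cases n <;> rfl
  | var Y => intro n
             cases n with
             | zero => simp [SpecTerm.eval, Thread.approx_zero, fEval]
             | succ n =>
               show (ρ Y).approx (n+1) = FinThread.proj (n+1) ((ρ Y).approx (n+1))
               rw [Thread.proj_approx_self]
  | pcc t a t' iht iht' =>
    intro n
    cases n with
    | zero => rfl
    | succ n =>
      show FinThread.pcc ((t.eval ρ).approx n) a ((t'.eval ρ).approx n) = _
      rw [iht n, iht' n]
      show FinThread.pcc _ a _ = FinThread.pcc _ a _
      have hc : ∀ m ≤ n, ∀ Y, FinThread.proj m ((ρ Y).approx n)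
          = FinThread.proj m ((ρ Y).approx (n+1)) := fun m hm Y => by
        rw [Thread.proj_approx _ n m hm, Thread.proj_approx _ (n+1) m (by omega)]
      rw [fEval_congr t n hc, fEval_congr t' n hc]

theorem gApprox_fixed {A V : Type} (E : V → SpecTerm A V) (hE : Guarded E) :
    ∀ n X, gApprox E n X = fEval (gApprox E n) n (E X) := by
  intro n X
  cases n with
  | zero => rfl
  | succ n =>
    show fEval (gApprox E n) (n+1) (E X) = _
    exact fEval_congr_guarded (E X) (hE X) n (fun m hm Y => by
      rw [← FinThread.proj_proj (gApprox E (n+1) Y) m n hm, gApprox_coh E hE n Y])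

/-- Every guarded recursive specification over BTA has exactly
one solution in the projective limit model of BTA.  (The actions are the
members of `A = A_b ∪ A_i`, where `A_b` and `A_i` are disjoint finite sets of
basic and internal actions with `tau ∈ A_i`.) -/
theorem guarded_spec_unique_solution
    (Act : Type) [DecidableEq Act] (Ab Ai : Finset Act)
    (hdisj : Disjoint Ab Ai) (tau : Act) (htau : tau ∈ Ai)
    (V : Type) (E : V → SpecTerm {a : Act // a ∈ Ab ∪ Ai} V) (hE : Guarded E) :
    ∃! ρ : V → Thread {a : Act // a ∈ Ab ∪ Ai}, IsSolution E ρ := by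
  refine ⟨fun X => ⟨fun n => gApprox E n X, fun n => gApprox_coh E hE n X⟩, ?_, ?_⟩
  · intro X
    apply Thread.ext'
    intro n
    show gApprox E n X = _
    rw [eval_approx]
    exact gApprox_fixed E hE n X
  · -- Uniqueness
    intro ρ hρ
    funext X
    apply Thread.ext'
    intro n
    show (ρ X).approx n = gApprox E n X
    induction n generalizing X with
    | zero => simp [Thread.approx_zero, gApprox]
    | succ n ih =>
      rw [hρ X, eval_approx]
      show _ = fEval (gApprox E n) (n+1) (E X)
      exact fEval_congr_guarded (E X) (hE X) n (fun m hm Y => by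
        rw [Thread.proj_approx _ (n+1) m (by omega), ← ih Y,
            Thread.proj_approx _ n m hm])
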